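/- arXiv:1409.2772 — 9 statements merged into one kernel-verified Lean document; each statement's English description precedes it below -/
import Mathlib

section
/- For the function g(x) = |x² − 1| on ℝ, every point a with |a| ≥ 1 is a point of convexity of g relative to the entire real line: for all x₁,...,xₙ ∈ ℝ and positive weights λ₁,...,λₙ with Σλₖ = 1 and Σλₖxₖ = a, we have |a² − 1| ≤ Σλₖ|xₖ² − 1|. -/
/-!
Since `|x² - 1| ≥ x² - 1 ≥ 2ax - a² - 1`, the tangent line of `x ↦ x² - 1` at `a` is an affine
minorant of `g = |x² - 1|`; when `|a| ≥ 1` it touches `g` at `a`. Averaging an affine minorant that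
touches `g` at the barycentre `a` gives `g a ≤ ∑ λₖ g(xₖ)`.
-/

open Finset

theorem le_sum_mul_of_affine_minorant {ι : Type*} (s : Finset ι) (g : ℝ → ℝ) (c d a : ℝ)
    (hmin : ∀ y, c * y + d ≤ g y) (htouch : g a = c * a + d)
    (w x : ι → ℝ) (hw : ∀ i ∈ s, 0 ≤ w i) (hsum : ∑ i ∈ s, w i = 1)
    (hbar : ∑ i ∈ s, w i * x i = a) :
    g a ≤ ∑ i ∈ s, w i * g (x i) :=
  calc g a = c * (∑ i ∈ s, w i * x i) + d * ∑ i ∈ s, w i := by rw [htouch, hbar, hsum, mul_one]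
    _ = ∑ i ∈ s, w i * (c * x i + d) := by
      rw [mul_sum, mul_sum, ← sum_add_distrib]
      exact sum_congr rfl fun i _ => by ring
    _ ≤ ∑ i ∈ s, w i * g (x i) :=
      sum_le_sum fun i hi => mul_le_mul_of_nonneg_left (hmin (x i)) (hw i hi)

theorem two_mul_mul_sub_sq_sub_one_le_abs_sq_sub_one (a y : ℝ) :
    2 * a * y + (-a ^ 2 - 1) ≤ |y ^ 2 - 1| := by
  nlinarith [le_abs_self (y ^ 2 - 1), sq_nonneg (y - a)]

theorem abs_sq_sub_one_of_one_le_abs {a : ℝ} (ha : 1 ≤ |a|) :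
    |a ^ 2 - 1| = 2 * a * a + (-a ^ 2 - 1) := by
  rw [abs_of_nonneg (by nlinarith [sq_abs a])]
  ring

theorem abs_sq_sub_one_point_of_convexity
    (a : ℝ) (ha : 1 ≤ |a|)
    (n : ℕ) (x : Fin n → ℝ) (lam : Fin n → ℝ)
    (hpos : ∀ k, 0 < lam k) (hsum : ∑ k, lam k = 1)
    (hbar : ∑ k, lam k * x k = a) :
    |a ^ 2 - 1| ≤ ∑ k, lam k * |x k ^ 2 - 1| :=
  le_sum_mul_of_affine_minorant univ (fun y => |y ^ 2 - 1|) (2 * a) (-a ^ 2 - 1) a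
    (two_mul_mul_sub_sq_sub_one_le_abs_sq_sub_one a) (abs_sq_sub_one_of_one_le_abs ha)
    lam x (fun k _ => (hpos k).le) hsum hbar
end

section
/- For every family of real numbers x₁, ..., xₙ and positive weights λ₁, ..., λₙ with Σₖ λₖ = 1 and Σₖ λₖ xₖ ≥ −1, the inequality Σₖ λₖ xₖ e^{xₖ} ≥ (Σₖ λₖ xₖ) · e^{Σₖ λₖ xₖ} holds. -/
/-!
The tangent line of `y ↦ y * exp y` at any point `s ≥ -1` lies below the whole graph, although the
function is only convex on `[-2, ∞)`. Applying the tangent inequality at the barycentre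
`s = ∑ λₖ xₖ` to each `xₖ` and averaging with the weights `λₖ` gives the claim.
-/

open Finset Real

theorem le_sum_mul_of_tangent_le {ι : Type*} (s : Finset ι) (w x : ι → ℝ) (f : ℝ → ℝ) (c : ℝ)
    (hw : ∀ i ∈ s, 0 ≤ w i) (hw₁ : ∑ i ∈ s, w i = 1)
    (htangent : ∀ y, f (∑ i ∈ s, w i * x i) + c * (y - ∑ i ∈ s, w i * x i) ≤ f y) :
    f (∑ i ∈ s, w i * x i) ≤ ∑ i ∈ s, w i * f (x i) := by
  set b := ∑ i ∈ s, w i * x i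
  calc f b = ∑ i ∈ s, w i * (f b + c * (x i - b)) := by
        simp only [mul_add, mul_left_comm (w _) c, mul_sub, sum_add_distrib, ← mul_sum, ← sum_mul,
          sum_sub_distrib, hw₁]
        ring
    _ ≤ ∑ i ∈ s, w i * f (x i) :=
        sum_le_sum fun i hi => mul_le_mul_of_nonneg_left (htangent _) (hw i hi)

theorem one_sub_mul_exp_le_one (t : ℝ) : (1 - t) * exp t ≤ 1 := by
  calc (1 - t) * exp t ≤ exp (-t) * exp t :=
        mul_le_mul_of_nonneg_right (one_sub_le_exp_neg t) (exp_pos t).le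
    _ = 1 := by rw [← exp_add, neg_add_cancel, exp_zero]

theorem mul_exp_tangent_le {s : ℝ} (hs : -1 ≤ s) (y : ℝ) :
    s * exp s + (1 + s) * exp s * (y - s) ≤ y * exp y := by
  obtain ⟨t, rfl⟩ : ∃ t, y = s + t := ⟨y - s, by ring⟩
  -- `(s + t) eᵗ - s - (1 + s) t = (1 + s) (eᵗ - 1 - t) + (1 - (1 - t) eᵗ)`, both terms nonnegative
  have hlin : s + (1 + s) * t ≤ (s + t) * exp t := by
    nlinarith [mul_nonneg (neg_le_iff_add_nonneg'.mp hs) (sub_nonneg.mpr (add_one_le_exp t)),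
      one_sub_mul_exp_le_one t]
  calc s * exp s + (1 + s) * exp s * (s + t - s) = (s + (1 + s) * t) * exp s := by ring
    _ ≤ (s + t) * exp t * exp s := mul_le_mul_of_nonneg_right hlin (exp_pos s).le
    _ = (s + t) * exp (s + t) := by rw [exp_add]; ring

theorem weighted_xexp_jensen
    (n : ℕ) (x : Fin n → ℝ) (lam : Fin n → ℝ)
    (hpos : ∀ k, 0 < lam k) (hsum : ∑ k, lam k = 1)
    (hbar : -1 ≤ ∑ k, lam k * x k) :
    (∑ k, lam k * x k) * Real.exp (∑ k, lam k * x k) ≤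
      ∑ k, lam k * (x k * Real.exp (x k)) :=
  le_sum_mul_of_tangent_le univ lam x (fun y => y * exp y) _ (fun k _ => (hpos k).le) hsum
    (mul_exp_tangent_le hbar)
end

section
/- Suppose f : K → ℝ is defined on a compact convex set K ⊆ ℝ^N, and Σᵢ λᵢ δ_{xᵢ} ≺ Σⱼ μⱼ δ_{yⱼ} are two positive discrete measures concentrated at points of K, meaning there exists an m×n matrix A = (a_{ij}) with a_{ij} ≥ 0, Σⱼ a_{ij} = 1 for each i, μⱼ = Σᵢ a_{ij} λᵢ for each j, and xᵢ = Σⱼ a_{ij} yⱼ for each i. If each xᵢ is a point of convexity of f relative to K, then Σᵢ λᵢ f(xᵢ) ≤ Σⱼ μⱼ f(yⱼ). -/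
/-!
Row `i` of `A` exhibits `xᵢ` as a barycentre of the `yⱼ`, so convexity at `xᵢ` gives
`f xᵢ ≤ ∑ⱼ aᵢⱼ f yⱼ`. Multiplying by `λᵢ`, summing over `i` and exchanging the sums turns the
right-hand side into `∑ⱼ (∑ᵢ aᵢⱼ λᵢ) f yⱼ = ∑ⱼ μⱼ f yⱼ`.
-/

open Finset

theorem Fintype.sum_eq_sum_subtype_of_eq_zero {ι M : Type*} [Fintype ι] [AddCommMonoid M]
    (p : ι → Prop) [DecidablePred p] {g : ι → M} (hg : ∀ j, ¬p j → g j = 0) :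
    ∑ j, g j = ∑ j : Subtype p, g j :=
  sum_congr_set {j | p j} g (fun j ↦ g j) (fun _ _ ↦ rfl) hg

def IsPointOfConvexity (𝕜 : Type*) {E : Type*} [Semiring 𝕜] [PartialOrder 𝕜] [AddCommMonoid E]
    [Module 𝕜 E] (K : Set E) (f : E → 𝕜) (a : E) : Prop :=
  ∀ (p : ℕ) (z : Fin p → E) (ν : Fin p → 𝕜), (∀ k, z k ∈ K) → (∀ k, 0 < ν k) → ∑ k, ν k = 1 →
    ∑ k, ν k • z k = a → f a ≤ ∑ k, ν k * f (z k)

namespace IsPointOfConvexity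

variable {𝕜 E ι : Type*} [Semiring 𝕜] [PartialOrder 𝕜] [AddCommMonoid E] [Module 𝕜 E]
  {K : Set E} {f : E → 𝕜} {a : E} [Fintype ι] {y : ι → E} {w : ι → 𝕜}

theorem le_sum_of_pos (ha : IsPointOfConvexity 𝕜 K f a) (hy : ∀ j, y j ∈ K) (hw : ∀ j, 0 < w j)
    (hw1 : ∑ j, w j = 1) (hwy : ∑ j, w j • y j = a) : f a ≤ ∑ j, w j * f (y j) := by
  let e := (Fintype.equivFin ι).symm
  rw [← e.sum_comp] at hw1 hwy ⊢
  exact ha _ _ _ (fun k ↦ hy _) (fun k ↦ hw _) hw1 hwy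

/-- The definition only admits positive weights, so pass to the support of `w`. -/
theorem le_sum_of_nonneg (ha : IsPointOfConvexity 𝕜 K f a) (hy : ∀ j, y j ∈ K)
    (hw : ∀ j, 0 ≤ w j) (hw1 : ∑ j, w j = 1) (hwy : ∑ j, w j • y j = a) :
    f a ≤ ∑ j, w j * f (y j) := by
  classical
  let p (j : ι) : Prop := w j ≠ 0
  rw [Fintype.sum_eq_sum_subtype_of_eq_zero p fun _ h ↦ not_not.mp h] at hw1
  rw [Fintype.sum_eq_sum_subtype_of_eq_zero p fun _ h ↦ by simp [not_not.mp h]] at hwy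
  rw [Fintype.sum_eq_sum_subtype_of_eq_zero p fun _ h ↦ by simp [not_not.mp h]]
  exact ha.le_sum_of_pos (fun j ↦ hy j) (fun j ↦ (hw j).lt_of_ne' j.2) hw1 hwy

end IsPointOfConvexity

theorem generalized_HLP_majorization_general
    {N : ℕ} (K : Set (EuclideanSpace ℝ (Fin N)))
    (f : EuclideanSpace ℝ (Fin N) → ℝ)
    (m n : ℕ)
    (x : Fin m → EuclideanSpace ℝ (Fin N)) (y : Fin n → EuclideanSpace ℝ (Fin N))
    (lam : Fin m → ℝ) (mu : Fin n → ℝ)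
    (hy : ∀ j, y j ∈ K)
    (hlam : ∀ i, 0 < lam i)
    (A : Fin m → Fin n → ℝ)
    (hA0 : ∀ i j, 0 ≤ A i j)
    (hArow : ∀ i, ∑ j, A i j = 1)
    (hAmu : ∀ j, mu j = ∑ i, A i j * lam i)
    (hAx : ∀ i, x i = ∑ j, A i j • y j)
    (hconv : ∀ i, ∀ (p : ℕ) (z : Fin p → EuclideanSpace ℝ (Fin N)) (nu : Fin p → ℝ),
      (∀ k, z k ∈ K) → (∀ k, 0 < nu k) → (∑ k, nu k = 1) →
      (∑ k, nu k • z k = x i) → f (x i) ≤ ∑ k, nu k * f (z k)) :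
    ∑ i, lam i * f (x i) ≤ ∑ j, mu j * f (y j) := by
  have jensen (i : Fin m) : f (x i) ≤ ∑ j, A i j * f (y j) :=
    IsPointOfConvexity.le_sum_of_nonneg (hconv i) hy (hA0 i) (hArow i) (hAx i).symm
  calc ∑ i, lam i * f (x i) ≤ ∑ i, lam i * ∑ j, A i j * f (y j) :=
        sum_le_sum fun i _ ↦ mul_le_mul_of_nonneg_left (jensen i) (hlam i).le
    _ = ∑ j, mu j * f (y j) := by
        simp_rw [mul_sum, hAmu, sum_mul]
        rw [sum_comm]
        exact sum_congr rfl fun j _ ↦ sum_congr rfl fun i _ ↦ by ring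

theorem generalized_HLP_majorization
    {N : ℕ} (K : Set (EuclideanSpace ℝ (Fin N)))
    (hK : IsCompact K) (hKc : Convex ℝ K)
    (f : EuclideanSpace ℝ (Fin N) → ℝ)
    (m n : ℕ)
    (x : Fin m → EuclideanSpace ℝ (Fin N)) (y : Fin n → EuclideanSpace ℝ (Fin N))
    (lam : Fin m → ℝ) (mu : Fin n → ℝ)
    (hx : ∀ i, x i ∈ K) (hy : ∀ j, y j ∈ K)
    (hlam : ∀ i, 0 < lam i) (hmu : ∀ j, 0 < mu j)
    (A : Fin m → Fin n → ℝ)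
    (hA0 : ∀ i j, 0 ≤ A i j)
    (hArow : ∀ i, ∑ j, A i j = 1)
    (hAmu : ∀ j, mu j = ∑ i, A i j * lam i)
    (hAx : ∀ i, x i = ∑ j, A i j • y j)
    (hconv : ∀ i, ∀ (p : ℕ) (z : Fin p → EuclideanSpace ℝ (Fin N)) (nu : Fin p → ℝ),
      (∀ k, z k ∈ K) → (∀ k, 0 < nu k) → (∑ k, nu k = 1) →
      (∑ k, nu k • z k = x i) → f (x i) ≤ ∑ k, nu k * f (z k)) :
    ∑ i, lam i * f (x i) ≤ ∑ j, mu j * f (y j) :=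
  generalized_HLP_majorization_general K f m n x y lam mu hy hlam A hA0 hArow hAmu hAx hconv
end

section
/- Let x and y be vectors in ℝ^N with entries in an interval I. If there exists a doubly stochastic N×N matrix A with x = Ay, then Σᵢ f(xᵢ) ≤ Σᵢ f(yᵢ) for every continuous convex function f : I → ℝ. -/
open Finset Matrix

variable {𝕜 n : Type*} [Field 𝕜] [LinearOrder 𝕜] [IsStrictOrderedRing 𝕜]
  [Fintype n] [DecidableEq n] {s : Set 𝕜} {f : 𝕜 → 𝕜} {M : Matrix n n 𝕜} {y : n → 𝕜}

-- Jensen's inequality, one row at a time.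
theorem ConvexOn.comp_mulVec_le_mulVec_comp (hf : ConvexOn 𝕜 s f) (hM : M ∈ rowStochastic 𝕜 n)
    (hy : ∀ j, y j ∈ s) : f ∘ (M *ᵥ y) ≤ M *ᵥ (f ∘ y) := fun i => by
  simpa [mulVec, dotProduct] using
    hf.map_sum_le (fun j _ => nonneg_of_mem_rowStochastic hM) (sum_row_of_mem_rowStochastic hM i)
      (fun j _ => hy j)

theorem ConvexOn.sum_comp_mulVec_le (hf : ConvexOn 𝕜 s f) (hM : M ∈ doublyStochastic 𝕜 n)
    (hy : ∀ j, y j ∈ s) : ∑ i, f ((M *ᵥ y) i) ≤ ∑ i, f (y i) :=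
  calc ∑ i, f ((M *ᵥ y) i)
      ≤ ∑ i, (M *ᵥ (f ∘ y)) i := sum_le_sum fun i _ =>
        hf.comp_mulVec_le_mulVec_comp
          (mem_doublyStochastic_iff_mem_rowStochastic_and_mem_colStochastic.1 hM).1 hy i
    _ = ∑ i, f (y i) := sum_mulVec_of_mem_doublyStochastic hM

theorem hlp_doublyStochastic_implies_convex_ineq_general
    {N : ℕ} (I : Set ℝ)
    (x y : Fin N → ℝ)
    (hy : ∀ i, y i ∈ I)
    (A : Matrix (Fin N) (Fin N) ℝ)
    (hA0 : ∀ i j, 0 ≤ A i j)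
    (hArow : ∀ i, ∑ j, A i j = 1)
    (hAcol : ∀ j, ∑ i, A i j = 1)
    (hxy : x = A.mulVec y)
    (f : ℝ → ℝ) (hf : ConvexOn ℝ I f) :
    ∑ i, f (x i) ≤ ∑ i, f (y i) := by
  subst hxy
  exact hf.sum_comp_mulVec_le (mem_doublyStochastic_iff_sum.2 ⟨hA0, hArow, hAcol⟩) hy

theorem hlp_doublyStochastic_implies_convex_ineq
    {N : ℕ} (I : Set ℝ) (hI : Convex ℝ I)
    (x y : Fin N → ℝ)
    (hx : ∀ i, x i ∈ I) (hy : ∀ i, y i ∈ I)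
    (A : Matrix (Fin N) (Fin N) ℝ)
    (hA0 : ∀ i j, 0 ≤ A i j)
    (hArow : ∀ i, ∑ j, A i j = 1)
    (hAcol : ∀ j, ∑ i, A i j = 1)
    (hxy : x = A.mulVec y)
    (f : ℝ → ℝ) (hf : ConvexOn ℝ I f) (hfc : ContinuousOn f I) :
    ∑ i, f (x i) ≤ ∑ i, f (y i) :=
  hlp_doublyStochastic_implies_convex_ineq_general I x y hy A hA0 hArow hAcol hxy f hf
end

section
/- Let x, y ∈ ℝ^N with entries in an interval I. If Σᵢ f(xᵢ) ≤ Σᵢ f(yᵢ) for every continuous convex function f : I → ℝ, then x is majorized by y, i.e., for each k = 1,...,N−1 the sum of the k largest entries of x is at most the sum of the k largest entries of y, and the total sums are equal. -/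
/-! Let `c` be the `(k+1)`-st largest entry of `y`. The convex hinge `t ↦ max (t - c) 0` sums over
`y` to exactly (sum of the `k` largest entries of `y`) `- k c`, and over `x` to at least
(sum of the `k` largest entries of `x`) `- k c`; the hypothesis compares the two. The total sums
agree by testing against `t ↦ t` and `t ↦ -t`. -/

/-- The decreasing rearrangement of a finite tuple of reals. -/
noncomputable def decRearr {N : ℕ} (x : Fin N → ℝ) : Fin N → ℝ :=
  fun i => x (Tuple.sort x i.rev)

open Finset

lemma decRearr_antitone {N : ℕ} (x : Fin N → ℝ) : Antitone (decRearr x) :=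
  fun _ _ hij => Tuple.monotone_sort x (Fin.rev_le_rev.mpr hij)

lemma sum_comp_decRearr {N : ℕ} (x : Fin N → ℝ) (g : ℝ → ℝ) :
    ∑ i, g (decRearr x i) = ∑ i, g (x i) :=
  Equiv.sum_comp (Fin.revPerm.trans (Tuple.sort x)) (fun i => g (x i))

lemma convexOn_max_sub_const_zero {I : Set ℝ} (hI : Convex ℝ I) (c : ℝ) :
    ConvexOn ℝ I (fun t => max (t - c) 0) :=
  ((convexOn_id hI).sub (concaveOn_const c hI)).sup (convexOn_const 0 hI)

lemma sum_sub_le_sum_max_sub_zero {ι : Type*} [Fintype ι] (s : Finset ι) (a : ι → ℝ)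
    (c : ℝ) :
    ∑ i ∈ s, (a i - c) ≤ ∑ i, max (a i - c) 0 :=
  calc ∑ i ∈ s, (a i - c)
      ≤ ∑ i ∈ s, max (a i - c) 0 := sum_le_sum fun _ _ => le_max_left _ _
    _ ≤ ∑ i, max (a i - c) 0 :=
        sum_le_sum_of_subset_of_nonneg (subset_univ s) fun _ _ _ => le_max_right _ _

lemma Antitone.sum_max_sub_apply_zero {N : ℕ} {a : Fin N → ℝ} (ha : Antitone a) (k : Fin N) :
    ∑ i, max (a i - a k) 0 = ∑ i ∈ univ.filter (fun i : Fin N => (i : ℕ) < k), (a i - a k) := by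
  rw [← sum_filter_add_sum_filter_not univ (fun i : Fin N => (i : ℕ) < k)]
  have head : ∀ i ∈ univ.filter (fun i : Fin N => (i : ℕ) < k), max (a i - a k) 0 = a i - a k :=
    fun i hi => max_eq_left (sub_nonneg.mpr (ha (mem_filter.mp hi).2.le))
  have tail : ∀ i ∈ univ.filter (fun i : Fin N => ¬ (i : ℕ) < k), max (a i - a k) 0 = 0 :=
    fun i hi => max_eq_right (sub_nonpos.mpr (ha (not_lt.mp (mem_filter.mp hi).2)))
  rw [sum_congr rfl head, sum_congr rfl tail, sum_const_zero, add_zero]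

theorem hlp_convex_ineq_implies_majorization_general
    {N : ℕ} (I : Set ℝ) (hI : Convex ℝ I)
    (x y : Fin N → ℝ)
    (h : ∀ f : ℝ → ℝ, ConvexOn ℝ I f → ContinuousOn f I →
      ∑ i, f (x i) ≤ ∑ i, f (y i)) :
    (∀ k < N,
      ∑ i ∈ Finset.univ.filter (fun i : Fin N => (i : ℕ) < k), decRearr x i ≤
      ∑ i ∈ Finset.univ.filter (fun i : Fin N => (i : ℕ) < k), decRearr y i) ∧
    ∑ i, x i = ∑ i, y i := by
  refine ⟨fun k hk => ?_, ?_⟩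
  · set c := decRearr y ⟨k, hk⟩
    have hinge := h (fun t => max (t - c) 0) (convexOn_max_sub_const_zero hI c)
      ((continuous_id.sub continuous_const).max continuous_const).continuousOn
    rw [← sum_comp_decRearr x (fun t => max (t - c) 0),
      ← sum_comp_decRearr y (fun t => max (t - c) 0),
      (decRearr_antitone y).sum_max_sub_apply_zero ⟨k, hk⟩] at hinge
    have shifted := (sum_sub_le_sum_max_sub_zero
      (univ.filter fun i : Fin N => (i : ℕ) < k) (decRearr x) c).trans hinge
    rw [sum_sub_distrib, sum_sub_distrib] at shifted
    exact (sub_le_sub_iff_right _).mp shifted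
  · have hid := h id (convexOn_id hI) continuousOn_id
    have hneg := h (fun t => -t) (concaveOn_id hI).neg continuous_neg.continuousOn
    simp only [id_eq, sum_neg_distrib, neg_le_neg_iff] at hid hneg
    exact hid.antisymm hneg

theorem hlp_convex_ineq_implies_majorization
    {N : ℕ} (I : Set ℝ) (hI : Convex ℝ I)
    (x y : Fin N → ℝ)
    (hx : ∀ i, x i ∈ I) (hy : ∀ i, y i ∈ I)
    (h : ∀ f : ℝ → ℝ, ConvexOn ℝ I f → ContinuousOn f I →
      ∑ i, f (x i) ≤ ∑ i, f (y i)) :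
    (∀ k < N,
      ∑ i ∈ Finset.univ.filter (fun i : Fin N => (i : ℕ) < k), decRearr x i ≤
      ∑ i ∈ Finset.univ.filter (fun i : Fin N => (i : ℕ) < k), decRearr y i) ∧
    ∑ i, x i = ∑ i, y i :=
  hlp_convex_ineq_implies_majorization_general I hI x y h
end

section
/- For every continuous convex function f : ℝ → ℝ and every triple a, b, c ∈ ℝ, the Popoviciu inequality holds: (f(a) + f(b) + f(c))/3 + f((a+b+c)/3) ≥ (2/3)[f((a+b)/2) + f((a+c)/2) + f((b+c)/2)]. -/
/-!
Two of `a, b, c` lie on the same side of their mean `m`, say `a` and `b`. Then `c` lies on the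
other side, and both `(a + c) / 2` and `(b + c) / 2` lie between `m` and `c`, with sum
`(3 m + c) / 2`; convexity on that segment gives
`f ((a + c) / 2) + f ((b + c) / 2) ≤ 3/2 f m + 1/2 f c`.
Adding the midpoint inequality `2 f ((a + b) / 2) ≤ f a + f b` yields the claim.
-/

open Set

lemma mul_nonneg_or_mul_nonneg_or_mul_nonneg (x y z : ℝ) :
    0 ≤ x * y ∨ 0 ≤ x * z ∨ 0 ≤ y * z := by
  by_contra! h
  obtain ⟨hxy, hxz, hyz⟩ := h
  -- the three products multiply to `(x * y * z) ^ 2`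
  have hneg : x * y * (x * z) * (y * z) < 0 :=
    mul_neg_of_pos_of_neg (mul_pos_of_neg_of_neg hxy hxz) hyz
  nlinarith [sq_nonneg (x * y * z)]

lemma Real.mem_uIcc_iff_mul_nonneg {x y z : ℝ} : y ∈ uIcc x z ↔ 0 ≤ (y - x) * (z - y) := by
  rw [mem_uIcc, mul_nonneg_iff, sub_nonneg, sub_nonneg, sub_nonpos, sub_nonpos]
  tauto

namespace ConvexOn

variable {s : Set ℝ} {f : ℝ → ℝ}

lemma sub_mul_le_of_mem_Icc (hf : ConvexOn ℝ s f) {x y z : ℝ} (hx : x ∈ s) (hz : z ∈ s)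
    (hy : y ∈ Icc x z) : (z - x) * f y ≤ (z - y) * f x + (y - x) * f z := by
  obtain ⟨hxy, hyz⟩ := hy
  rcases hxy.eq_or_lt with rfl | hxy
  · linarith
  rcases hyz.eq_or_lt with rfl | hyz
  · linarith
  exact hf.secant_mono_aux1 hx hz hxy hyz

lemma add_le_of_mem_uIcc (hf : ConvexOn ℝ s f) {x y u v α β : ℝ} (hx : x ∈ s) (hy : y ∈ s)
    (hu : u ∈ uIcc x y) (hv : v ∈ uIcc x y) (hαβ : α + β = 2) (huv : u + v = α * x + β * y) :
    f u + f v ≤ α * f x + β * f y := by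
  wlog hxy : x ≤ y generalizing x y α β
  · rw [uIcc_comm] at hu hv
    rw [add_comm (α * f x)]
    exact this hy hx hu hv (by linarith) (by linarith) (le_of_not_ge hxy)
  rcases hxy.eq_or_lt with rfl | hxy
  · rw [uIcc_self, mem_singleton_iff] at hu hv
    rw [hu, hv]
    linear_combination (-f x) * hαβ
  rw [uIcc_of_le hxy.le] at hu hv
  have hfu := hf.sub_mul_le_of_mem_Icc hx hy hu
  have hfv := hf.sub_mul_le_of_mem_Icc hx hy hv
  have hα : α * (y - x) = 2 * y - (u + v) := by linear_combination y * hαβ + huv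
  have hβ : β * (y - x) = u + v - 2 * x := by linear_combination -x * hαβ - huv
  refine le_of_mul_le_mul_left ?_ (sub_pos.2 hxy)
  linear_combination hfu + hfv - f x * hα - f y * hβ

lemma popoviciu_of_mul_nonneg (hf : ConvexOn ℝ s f) {a b c m : ℝ} (ha : a ∈ s) (hb : b ∈ s)
    (hc : c ∈ s) (hm : 3 * m = a + b + c) (hab : 0 ≤ (a - m) * (b - m)) :
    (2 / 3) * (f ((a + b) / 2) + f ((a + c) / 2) + f ((b + c) / 2)) ≤
      (f a + f b + f c) / 3 + f m := by
  obtain rfl : c = 3 * m - a - b := by linarith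
  have hm_mem : m ∈ uIcc a (3 * m - a - b) := by
    rw [Real.mem_uIcc_iff_mul_nonneg]; nlinarith [sq_nonneg (a - m)]
  have hab_mem : (a + b) / 2 ∈ uIcc a b := by
    rw [Real.mem_uIcc_iff_mul_nonneg]; nlinarith [sq_nonneg (a - b)]
  have hac_mem : (a + (3 * m - a - b)) / 2 ∈ uIcc m (3 * m - a - b) := by
    rw [Real.mem_uIcc_iff_mul_nonneg]; nlinarith [sq_nonneg (b - m)]
  have hbc_mem : (b + (3 * m - a - b)) / 2 ∈ uIcc m (3 * m - a - b) := by
    rw [Real.mem_uIcc_iff_mul_nonneg]; nlinarith [sq_nonneg (a - m)]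
  have hms : m ∈ s := hf.1.ordConnected.uIcc_subset ha hc hm_mem
  have hmid := hf.add_le_of_mem_uIcc ha hb hab_mem hab_mem one_add_one_eq_two (by ring)
  have hpair := hf.add_le_of_mem_uIcc hms hc hac_mem hbc_mem (α := 3 / 2) (β := 1 / 2)
    (by norm_num) (by ring)
  linarith

end ConvexOn

theorem popoviciu_inequality_general
    (f : ℝ → ℝ) (hf : ConvexOn ℝ Set.univ f)
    (a b c : ℝ) :
    (2 / 3) * (f ((a + b) / 2) + f ((a + c) / 2) + f ((b + c) / 2)) ≤
      (f a + f b + f c) / 3 + f ((a + b + c) / 3) := by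
  have key := fun x y z ↦ hf.popoviciu_of_mul_nonneg (m := (a + b + c) / 3)
    (mem_univ x) (mem_univ y) (mem_univ z)
  rcases mul_nonneg_or_mul_nonneg_or_mul_nonneg (a - (a + b + c) / 3) (b - (a + b + c) / 3)
    (c - (a + b + c) / 3) with h | h | h
  · exact key a b c (by ring) h
  · have := key a c b (by ring) h
    rw [add_comm c b] at this
    linarith
  · have := key b c a (by ring) h
    rw [add_comm b a, add_comm c a] at this
    linarith

theorem popoviciu_inequality
    (f : ℝ → ℝ) (hf : ConvexOn ℝ Set.univ f) (hfc : Continuous f)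
    (a b c : ℝ) :
    (2 / 3) * (f ((a + b) / 2) + f ((a + c) / 2) + f ((b + c) / 2)) ≤
      (f a + f b + f c) / 3 + f ((a + b + c) / 3) :=
  popoviciu_inequality_general f hf a b c
end

section
/- Assume WLOG a ≥ b ≥ c and a ≥ (a+b+c)/3 ≥ b. Then the 6-tuple x = ((a+b)/2, (a+b)/2, (a+c)/2, (a+c)/2, (b+c)/2, (b+c)/2) is majorized by the 6-tuple y = (a, (a+b+c)/3, (a+b+c)/3, (a+b+c)/3, b, c): the partial sums of the decreasing rearrangement of x are bounded by those of y, with equal total sums. -/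
theorem decRearr_eq_self_of_antitone {N : ℕ} {x : Fin N → ℝ} (hx : Antitone x) :
    decRearr x = x := by
  have hsort : x ∘ Fin.revPerm = x ∘ Tuple.sort x :=
    Tuple.comp_sort_eq_comp_iff_monotone.mpr (hx.comp Fin.rev_anti)
  funext i
  simpa [decRearr] using (congrFun hsort i.rev).symm

theorem popoviciu_sextuple_majorization_general
    (a b c : ℝ) (hab : b ≤ a) (hbc : c ≤ b)
    (hm2 : b ≤ (a + b + c) / 3) :
    let x : Fin 6 → ℝ :=
      ![(a + b) / 2, (a + b) / 2, (a + c) / 2, (a + c) / 2, (b + c) / 2, (b + c) / 2]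
    let y : Fin 6 → ℝ :=
      ![a, (a + b + c) / 3, (a + b + c) / 3, (a + b + c) / 3, b, c]
    (∀ k < 6,
      ∑ i ∈ Finset.univ.filter (fun i : Fin 6 => (i : ℕ) < k), decRearr x i ≤
      ∑ i ∈ Finset.univ.filter (fun i : Fin 6 => (i : ℕ) < k), decRearr y i) ∧
    ∑ i, x i = ∑ i, y i := by
  intro x y
  have hx : Antitone x := Fin.antitone_iff_succ_le.mpr fun i => by
    fin_cases i <;> simp [x] <;> linarith
  have hy : Antitone y := Fin.antitone_iff_succ_le.mpr fun i => by
    fin_cases i <;> simp [y] <;> linarith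
  rw [decRearr_eq_self_of_antitone hx, decRearr_eq_self_of_antitone hy]
  refine ⟨fun k hk => ?_, ?_⟩
  · simp only [Finset.sum_filter, Fin.sum_univ_six]
    interval_cases k <;> simp [x, y] <;> linarith
  · simp [Fin.sum_univ_six, x, y]
    ring

theorem popoviciu_sextuple_majorization
    (a b c : ℝ) (hab : b ≤ a) (hbc : c ≤ b) (hm1 : (a + b + c) / 3 ≤ a)
    (hm2 : b ≤ (a + b + c) / 3) :
    let x : Fin 6 → ℝ :=
      ![(a + b) / 2, (a + b) / 2, (a + c) / 2, (a + c) / 2, (b + c) / 2, (b + c) / 2]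
    let y : Fin 6 → ℝ :=
      ![a, (a + b + c) / 3, (a + b + c) / 3, (a + b + c) / 3, b, c]
    (∀ k < 6,
      ∑ i ∈ Finset.univ.filter (fun i : Fin 6 => (i : ℕ) < k), decRearr x i ≤
      ∑ i ∈ Finset.univ.filter (fun i : Fin 6 => (i : ℕ) < k), decRearr y i) ∧
    ∑ i, x i = ∑ i, y i :=
  popoviciu_sextuple_majorization_general a b c hab hbc hm2
end

section
/- Let x₁, x₂, x₃ and y₁, y₂, y₃ be positive real numbers satisfying x₁+x₂+x₃ ≤ y₁+y₂+y₃, x₁x₂+x₂x₃+x₃x₁ ≤ y₁y₂+y₂y₃+y₃y₁, and x₁x₂x₃ = y₁y₂y₃. Then log²x₁ + log²x₂ + log²x₃ ≤ log²y₁ + log²y₂ + log²y₃. -/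
/-!
Let `Ψ a = ∫₀ᵃ log (1 + s) / s ds = ∫₀¹ log (1 + a t) / t dt`, i.e. `Ψ a = -Li₂ (-a)`. The
dilogarithm inversion formula `Ψ a + Ψ a⁻¹ = (log a)² / 2 + 2 Ψ 1` turns `∑ (log xᵢ)² / 2` into
`∑ Ψ xᵢ + ∑ Ψ xᵢ⁻¹` up to a constant, and `∑ Ψ xᵢ = ∫₀¹ log (∏ (1 + xᵢ t)) / t dt` is monotone in
the polynomial `∏ (1 + xᵢ t) = 1 + e₁ t + e₂ t² + e₃ t³`. The hypotheses compare these polynomials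
for `x` and `y`, and, because `e₃(x) = e₃(y)`, also those of `x⁻¹` and `y⁻¹`.
-/

open MeasureTheory Set Real

noncomputable def integralLogOneAddDiv (a : ℝ) : ℝ := ∫ s in (0 : ℝ)..a, log (1 + s) / s

lemma intervalIntegrable_log_one_add_mul_div {a b : ℝ} (ha : 0 ≤ a) (hb : 0 ≤ b) :
    IntervalIntegrable (fun t => log (1 + a * t) / t) volume 0 b := by
  rw [intervalIntegrable_iff_integrableOn_Ioc_of_le hb]
  refine Integrable.mono' (integrable_const a) ?_ ?_
  · exact (by fun_prop : Measurable fun t => log (1 + a * t) / t).aestronglyMeasurable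
  · rw [ae_restrict_iff' measurableSet_Ioc]
    filter_upwards with t ⟨ht, _⟩
    have hat : 0 ≤ a * t := mul_nonneg ha ht.le
    have hlog_le : log (1 + a * t) ≤ a * t := by
      linarith [log_le_sub_one_of_pos (x := 1 + a * t) (by linarith)]
    rw [norm_eq_abs, abs_of_nonneg (div_nonneg (log_nonneg (by linarith)) ht.le),
      div_le_iff₀ ht]
    linarith

lemma integralLogOneAddDiv_eq_integral_unitInterval (a : ℝ) :
    integralLogOneAddDiv a = ∫ t in (0 : ℝ)..1, log (1 + a * t) / t := by
  have hscale : (fun t => log (1 + a * t) / t) = fun t => a * (log (1 + a * t) / (a * t)) := by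
    funext t
    rcases eq_or_ne a 0 with rfl | ha
    · simp
    rcases eq_or_ne t 0 with rfl | ht
    · simp
    field_simp
  rw [hscale, intervalIntegral.integral_const_mul,
    intervalIntegral.mul_integral_comp_mul_left (f := fun s => log (1 + s) / s), mul_zero,
    mul_one, integralLogOneAddDiv]

lemma hasDerivAt_integralLogOneAddDiv {a : ℝ} (ha : 0 < a) :
    HasDerivAt integralLogOneAddDiv (log (1 + a) / a) a := by
  have hint : IntervalIntegrable (fun s => log (1 + s) / s) volume 0 a := by
    simpa using intervalIntegrable_log_one_add_mul_div zero_le_one ha.le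
  have hmeas : Measurable fun s => log (1 + s) / s := by fun_prop
  have hcont : ContinuousAt (fun s => log (1 + s) / s) a :=
    ((continuousAt_const.add continuousAt_id).log (by linarith : 0 < 1 + a).ne').div
      continuousAt_id ha.ne'
  exact intervalIntegral.integral_hasDerivAt_right hint
    hmeas.aestronglyMeasurable.stronglyMeasurableAtFilter hcont

lemma integralLogOneAddDiv_add_inv {a : ℝ} (ha : 0 < a) :
    integralLogOneAddDiv a + integralLogOneAddDiv a⁻¹
      = log a ^ 2 / 2 + 2 * integralLogOneAddDiv 1 := by
  set D : ℝ → ℝ := fun u =>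
    integralLogOneAddDiv u + integralLogOneAddDiv u⁻¹ - log u ^ 2 / 2
  have hD : ∀ u ∈ Ioi (0 : ℝ), HasDerivAt D 0 u := by
    intro u (hu : 0 < u)
    have hinv := (hasDerivAt_integralLogOneAddDiv (inv_pos.2 hu)).comp u (hasDerivAt_inv hu.ne')
    have hsq := ((hasDerivAt_log hu.ne').pow 2).div_const 2
    refine ((hasDerivAt_integralLogOneAddDiv hu).add hinv |>.sub hsq).congr_deriv ?_
    have hlog : log (1 + u) = log u + log (1 + u⁻¹) := by
      rw [← log_mul hu.ne' (by positivity)]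
      congr 1
      field_simp
      ring
    rw [hlog]
    field_simp
    ring
  have hconst : D a = D 1 :=
    isOpen_Ioi.is_const_of_deriv_eq_zero isPreconnected_Ioi
      (fun u hu => (hD u hu).differentiableAt.differentiableWithinAt)
      (fun u hu => (hD u hu).deriv) ha (mem_Ioi.2 one_pos)
  simp only [D, inv_one, log_one] at hconst
  linarith

section FinsetFamilies

variable {ι : Type*} {s : Finset ι} {x y : ι → ℝ}

lemma sum_integralLogOneAddDiv_le_of_prod_le
    (hx : ∀ i ∈ s, 0 ≤ x i) (hy : ∀ i ∈ s, 0 ≤ y i)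
    (h : ∀ t > 0, ∏ i ∈ s, (1 + x i * t) ≤ ∏ i ∈ s, (1 + y i * t)) :
    ∑ i ∈ s, integralLogOneAddDiv (x i) ≤ ∑ i ∈ s, integralLogOneAddDiv (y i) := by
  have hint {z : ι → ℝ} (hz : ∀ i ∈ s, 0 ≤ z i) (i : ι) (hi : i ∈ s) :
      IntervalIntegrable (fun t => log (1 + z i * t) / t) volume 0 1 :=
    intervalIntegrable_log_one_add_mul_div (hz i hi) zero_le_one
  have hsum {z : ι → ℝ} (hz : ∀ i ∈ s, 0 ≤ z i) {t : ℝ} (ht : 0 < t) :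
      ∑ i ∈ s, log (1 + z i * t) / t = log (∏ i ∈ s, (1 + z i * t)) / t := by
    rw [← Finset.sum_div, log_prod fun i hi => by nlinarith [hz i hi]]
  simp only [integralLogOneAddDiv_eq_integral_unitInterval]
  rw [← intervalIntegral.integral_finsetSum (hint hx),
    ← intervalIntegral.integral_finsetSum (hint hy)]
  refine intervalIntegral.integral_mono_on zero_le_one ?_ ?_ fun t ⟨ht, _⟩ => ?_
  · simpa only [Finset.sum_fn] using IntervalIntegrable.sum s (hint hx)
  · simpa only [Finset.sum_fn] using IntervalIntegrable.sum s (hint hy)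
  rcases ht.eq_or_lt with rfl | ht
  · simp
  rw [hsum hx ht, hsum hy ht]
  exact div_le_div_of_nonneg_right
    (log_le_log (Finset.prod_pos fun i hi => by nlinarith [hx i hi]) (h t ht)) ht.le

lemma prod_one_add_inv_mul_le_of_prod_eq
    (hx : ∀ i ∈ s, 0 < x i) (hy : ∀ i ∈ s, 0 < y i) (hprod : ∏ i ∈ s, x i = ∏ i ∈ s, y i)
    (h : ∀ t > 0, ∏ i ∈ s, (1 + x i * t) ≤ ∏ i ∈ s, (1 + y i * t)) {t : ℝ} (ht : 0 < t) :
    ∏ i ∈ s, (1 + (x i)⁻¹ * t) ≤ ∏ i ∈ s, (1 + (y i)⁻¹ * t) := by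
  have hreverse {z : ι → ℝ} (hz : ∀ i ∈ s, 0 < z i) :
      ∏ i ∈ s, (1 + (z i)⁻¹ * t) = t ^ s.card * ((∏ i ∈ s, (1 + z i * t⁻¹)) / ∏ i ∈ s, z i) := by
    rw [← Finset.prod_div_distrib, ← Finset.prod_const, ← Finset.prod_mul_distrib]
    refine Finset.prod_congr rfl fun i hi => ?_
    have := (hz i hi).ne'
    field_simp
    ring
  rw [hreverse hx, hreverse hy, hprod]
  exact mul_le_mul_of_nonneg_left
    (div_le_div_of_nonneg_right (h _ (inv_pos.2 ht)) (Finset.prod_pos hy).le) (by positivity)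

theorem sum_log_sq_le_of_prod_eq_of_prod_one_add_mul_le
    (hx : ∀ i ∈ s, 0 < x i) (hy : ∀ i ∈ s, 0 < y i) (hprod : ∏ i ∈ s, x i = ∏ i ∈ s, y i)
    (h : ∀ t > 0, ∏ i ∈ s, (1 + x i * t) ≤ ∏ i ∈ s, (1 + y i * t)) :
    ∑ i ∈ s, log (x i) ^ 2 ≤ ∑ i ∈ s, log (y i) ^ 2 := by
  have hsplit {z : ι → ℝ} (hz : ∀ i ∈ s, 0 < z i) : ∑ i ∈ s, log (z i) ^ 2 =
      2 * (∑ i ∈ s, integralLogOneAddDiv (z i) + ∑ i ∈ s, integralLogOneAddDiv (z i)⁻¹)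
        - ∑ _i ∈ s, 4 * integralLogOneAddDiv 1 := by
    rw [← Finset.sum_add_distrib, Finset.mul_sum, ← Finset.sum_sub_distrib]
    exact Finset.sum_congr rfl fun i hi => by linarith [integralLogOneAddDiv_add_inv (hz i hi)]
  have hdirect := sum_integralLogOneAddDiv_le_of_prod_le (fun i hi => (hx i hi).le)
    (fun i hi => (hy i hi).le) h
  have hinverse := sum_integralLogOneAddDiv_le_of_prod_le (fun i hi => (inv_pos.2 (hx i hi)).le)
    (fun i hi => (inv_pos.2 (hy i hi)).le)
    fun t ht => prod_one_add_inv_mul_le_of_prod_eq hx hy hprod h ht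
  rw [hsplit hx, hsplit hy]
  linarith

end FinsetFamilies

lemma prod_one_add_mul_three_le {x₁ x₂ x₃ y₁ y₂ y₃ t : ℝ} (ht : 0 ≤ t)
    (h1 : x₁ + x₂ + x₃ ≤ y₁ + y₂ + y₃)
    (h2 : x₁ * x₂ + x₂ * x₃ + x₃ * x₁ ≤ y₁ * y₂ + y₂ * y₃ + y₃ * y₁)
    (h3 : x₁ * x₂ * x₃ ≤ y₁ * y₂ * y₃) :
    (1 + x₁ * t) * (1 + x₂ * t) * (1 + x₃ * t) ≤ (1 + y₁ * t) * (1 + y₂ * t) * (1 + y₃ * t) := by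
  nlinarith [mul_le_mul_of_nonneg_right h1 ht, mul_le_mul_of_nonneg_right h2 (pow_nonneg ht 2),
    mul_le_mul_of_nonneg_right h3 (pow_nonneg ht 3)]

theorem birsan_neff_lankeit
    (x₁ x₂ x₃ y₁ y₂ y₃ : ℝ)
    (hx₁ : 0 < x₁) (hx₂ : 0 < x₂) (hx₃ : 0 < x₃)
    (hy₁ : 0 < y₁) (hy₂ : 0 < y₂) (hy₃ : 0 < y₃)
    (h1 : x₁ + x₂ + x₃ ≤ y₁ + y₂ + y₃)
    (h2 : x₁ * x₂ + x₂ * x₃ + x₃ * x₁ ≤ y₁ * y₂ + y₂ * y₃ + y₃ * y₁)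
    (h3 : x₁ * x₂ * x₃ = y₁ * y₂ * y₃) :
    Real.log x₁ ^ 2 + Real.log x₂ ^ 2 + Real.log x₃ ^ 2 ≤
      Real.log y₁ ^ 2 + Real.log y₂ ^ 2 + Real.log y₃ ^ 2 := by
  have key := sum_log_sq_le_of_prod_eq_of_prod_one_add_mul_le (s := Finset.univ)
    (x := ![x₁, x₂, x₃]) (y := ![y₁, y₂, y₃])
    (by simp [Fin.forall_fin_succ, hx₁, hx₂, hx₃]) (by simp [Fin.forall_fin_succ, hy₁, hy₂, hy₃])
    (by simpa [Fin.prod_univ_three] using h3)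
    (fun t ht => by
      simpa [Fin.prod_univ_three] using prod_one_add_mul_three_le ht.le h1 h2 h3.le)
  simpa [Fin.sum_univ_three] using key
end

section
/- If f : ℝ → ℝ is convex, then the function F(X) = trace(f(X)) on the real symmetric n×n matrices (where f(X) is defined by functional calculus, applying f to the eigenvalues) is convex: F(λA + (1−λ)B) ≤ λF(A) + (1−λ)F(B) for all symmetric A, B and λ ∈ [0,1]. -/
/-!
Peierls' inequality: for a unitary `U`, the diagonal of `Uᴴ M U` is `P *ᵥ λ(M)` with
`P i j = ‖(Uᴴ V) i j‖²`, `V` an eigenbasis of `M`. Since `Uᴴ V` is unitary, `P` is doubly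
stochastic, so Jensen's inequality row by row gives `∑ f ((Uᴴ M U) i i) ≤ ∑ f (λ(M) i)`.
Taking `U` an eigenbasis of `C = lam • A + (1 - lam) • B`, the eigenvalues of `C` are
`lam • (Uᴴ A U) i i + (1 - lam) • (Uᴴ B U) i i`; apply convexity of `f` to each of them and then
Peierls' inequality to `A` and `B`.
-/

open Matrix Finset

theorem ConvexOn.sum_map_mulVec_le_of_mem_doublyStochastic
    {𝕜 β ι : Type*} [Field 𝕜] [LinearOrder 𝕜] [IsStrictOrderedRing 𝕜]
    [AddCommGroup β] [PartialOrder β] [IsOrderedAddMonoid β] [Module 𝕜 β]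
    [IsStrictOrderedModule 𝕜 β] [Fintype ι] [DecidableEq ι]
    {s : Set 𝕜} {f : 𝕜 → β} (hf : ConvexOn 𝕜 s f) {P : Matrix ι ι 𝕜}
    (hP : P ∈ doublyStochastic 𝕜 ι) {x : ι → 𝕜} (hx : ∀ i, x i ∈ s) :
    ∑ i, f ((P *ᵥ x) i) ≤ ∑ i, f (x i) :=
  calc ∑ i, f ((P *ᵥ x) i) ≤ ∑ i, ∑ j, P i j • f (x j) := by
        refine sum_le_sum fun i _ => ?_
        simpa only [mulVec, dotProduct, smul_eq_mul] using
          hf.map_sum_le (fun j _ => nonneg_of_mem_doublyStochastic hP)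
            (sum_row_of_mem_doublyStochastic hP i) fun j _ => hx j
    _ = ∑ j, f (x j) := by
        rw [sum_comm]
        simp only [← sum_smul, sum_col_of_mem_doublyStochastic hP, one_smul]

variable {𝕜 ι : Type*} [RCLike 𝕜] [Fintype ι] [DecidableEq ι]

namespace Matrix

theorem of_norm_sq_mem_doublyStochastic {U : Matrix ι ι 𝕜} (hU : U ∈ unitaryGroup ι 𝕜) :
    of (fun i j => ‖U i j‖ ^ 2) ∈ doublyStochastic ℝ ι := by
  have hrow i : ∑ j, ‖U i j‖ ^ 2 = 1 := by
    have := congr_fun₂ (mem_unitaryGroup_iff.mp hU) i i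
    simp only [mul_apply, star_apply, RCLike.star_def, RCLike.mul_conj, one_apply_eq] at this
    exact_mod_cast this
  have hcol j : ∑ i, ‖U i j‖ ^ 2 = 1 := by
    have := congr_fun₂ (mem_unitaryGroup_iff'.mp hU) j j
    simp only [mul_apply, star_apply, RCLike.star_def, RCLike.conj_mul, one_apply_eq] at this
    exact_mod_cast this
  exact mem_doublyStochastic_iff_sum.mpr ⟨fun _ _ => sq_nonneg _, hrow, hcol⟩

namespace IsHermitian

variable {M : Matrix ι ι 𝕜} (hM : M.IsHermitian)

theorem star_mul_mul_apply_self (U : Matrix ι ι 𝕜) (i : ι) :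
    (star U * M * U) i i =
      ((of fun i j => ‖(star U * hM.eigenvectorUnitary) i j‖ ^ 2) *ᵥ hM.eigenvalues) i := by
  set W := star U * (hM.eigenvectorUnitary : Matrix ι ι 𝕜)
  have hconj : star U * M * U = W * diagonal (RCLike.ofReal ∘ hM.eigenvalues) * star W := by
    conv_lhs => rw [hM.spectral_theorem]
    simp [W, star_mul, mul_assoc]
  rw [hconj, mul_apply]
  simp only [mul_diagonal, star_apply, Function.comp_apply, mulVec, dotProduct, of_apply,
    RCLike.ofReal_sum, RCLike.ofReal_mul, RCLike.ofReal_pow]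
  refine sum_congr rfl fun j _ => ?_
  rw [mul_right_comm, RCLike.star_def, RCLike.mul_conj]

theorem eigenvalues_eq_re_star_mul_mul_apply_self (i : ι) :
    hM.eigenvalues i =
      RCLike.re ((star hM.eigenvectorUnitary * M * hM.eigenvectorUnitary : Matrix ι ι 𝕜) i i) := by
  have := congr_fun₂ hM.conjStarAlgAut_star_eigenvectorUnitary i i
  simp_all

theorem sum_map_re_star_mul_mul_apply_self_le {β : Type*} [AddCommGroup β] [PartialOrder β]
    [IsOrderedAddMonoid β] [Module ℝ β] [IsStrictOrderedModule ℝ β] {U : Matrix ι ι 𝕜}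
    (hU : U ∈ unitaryGroup ι 𝕜) {s : Set ℝ} {f : ℝ → β} (hf : ConvexOn ℝ s f)
    (hs : ∀ i, hM.eigenvalues i ∈ s) :
    ∑ i, f (RCLike.re ((star U * M * U) i i)) ≤ ∑ i, f (hM.eigenvalues i) := by
  simp only [hM.star_mul_mul_apply_self, RCLike.ofReal_re]
  exact hf.sum_map_mulVec_le_of_mem_doublyStochastic
    (of_norm_sq_mem_doublyStochastic (mul_mem (Unitary.star_mem hU) hM.eigenvectorUnitary.2)) hs

end IsHermitian

end Matrix

theorem trace_functional_calculus_convex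
    {n : ℕ} (f : ℝ → ℝ) (hf : ConvexOn ℝ Set.univ f)
    (A B : Matrix (Fin n) (Fin n) ℝ)
    (hA : A.IsHermitian) (hB : B.IsHermitian)
    (lam : ℝ) (hlam0 : 0 ≤ lam) (hlam1 : lam ≤ 1)
    (hAB : (lam • A + (1 - lam) • B).IsHermitian) :
    ∑ i, f (hAB.eigenvalues i) ≤
      lam * ∑ i, f (hA.eigenvalues i) + (1 - lam) * ∑ i, f (hB.eigenvalues i) := by
  set U : Matrix (Fin n) (Fin n) ℝ := ↑hAB.eigenvectorUnitary
  have hU : U ∈ unitaryGroup (Fin n) ℝ := hAB.eigenvectorUnitary.2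
  have hlam : 0 ≤ 1 - lam := sub_nonneg.mpr hlam1
  have hdiag i :
      hAB.eigenvalues i = lam * (star U * A * U) i i + (1 - lam) * (star U * B * U) i i := by
    rw [hAB.eigenvalues_eq_re_star_mul_mul_apply_self]
    simp [U, mul_add, add_mul]
  have hpeierls (M : Matrix (Fin n) (Fin n) ℝ) (hM : M.IsHermitian) :
      ∑ i, f ((star U * M * U) i i) ≤ ∑ i, f (hM.eigenvalues i) := by
    simpa using hM.sum_map_re_star_mul_mul_apply_self_le hU hf fun _ => Set.mem_univ _
  calc ∑ i, f (hAB.eigenvalues i)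
      ≤ ∑ i, (lam * f ((star U * A * U) i i) + (1 - lam) * f ((star U * B * U) i i)) :=
        sum_le_sum fun i _ => hdiag i ▸ hf.2 trivial trivial hlam0 hlam (by ring)
    _ = lam * ∑ i, f ((star U * A * U) i i) + (1 - lam) * ∑ i, f ((star U * B * U) i i) := by
        rw [sum_add_distrib, mul_sum, mul_sum]
    _ ≤ lam * ∑ i, f (hA.eigenvalues i) + (1 - lam) * ∑ i, f (hB.eigenvalues i) := by
        gcongr lam * ?_ + (1 - lam) * ?_
        exacts [hpeierls A hA, hpeierls B hB]
end
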